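/- For any two ℤ^d-invariant probability measures μ and ν on {0,1}^{ℤ^d}, one has |H(μ) − H(ν)| ≤ H[d̄(μ,ν)]. -/

import Mathlib

open MeasureTheory Matrix Filter Topology
open scoped ENNReal Real

noncomputable section

abbrev Torus (d : ℕ) : Type := Fin d → AddCircle (1 : ℝ)

abbrev Config (d : ℕ) : Type := (Fin d → ℤ) → Bool

/-- The character `e_k : x ↦ e^{2πi k·x}` on the `d`-dimensional torus. -/
def charFn {d : ℕ} (k : Fin d → ℤ) (x : Torus d) : ℂ := ∏ i, (fourier (k i) (x i) : ℂ)

/-- The Fourier coefficient `f̂(k) = ∫ f(x) e^{-2πi k·x} dλ_d(x)`. -/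
def fCoeff {d : ℕ} (f : Torus d → ℝ) (k : Fin d → ℤ) : ℂ :=
  ∫ x : Torus d, (f x : ℂ) * charFn (-k) x ∂volume

/-- Translation of configurations by `v ∈ ℤ^d`. -/
def shiftC {d : ℕ} (v : Fin d → ℤ) (η : Config d) : Config d := fun k => η (k + v)

/-- `P` is the determinantal measure associated to `f`. -/
def IsDeterminantal {d : ℕ} (f : Torus d → ℝ) (P : Measure (Config d)) : Prop :=
  ∀ (n : ℕ) (e : Fin n → (Fin d → ℤ)), Function.Injective e →
    (((P {η : Config d | ∀ i, η (e i) = true}).toReal : ℝ) : ℂ) =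
      Matrix.det (Matrix.of fun i j : Fin n => fCoeff f (e j - e i))

/-- The set of `ℤ^d`-invariant couplings of `μ` and `ν`. -/
def invCouplings {d : ℕ} (μ ν : Measure (Config d)) : Set (Measure (Config d × Config d)) :=
  {m | IsProbabilityMeasure m ∧
    (∀ v : Fin d → ℤ, Measure.map (Prod.map (shiftC v) (shiftC v)) m = m) ∧
    Measure.map Prod.fst m = μ ∧ Measure.map Prod.snd m = ν}

/-- The `d̄`-distance between `ℤ^d`-invariant measures on `{0,1}^{ℤ^d}`. -/
def dbar {d : ℕ} (μ ν : Measure (Config d)) : ℝ≥0∞ :=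
  sInf ((fun m : Measure (Config d × Config d) =>
    m {p : Config d × Config d | p.1 0 ≠ p.2 0}) '' invCouplings μ ν)

/-- The cylinder event over the box `B_n = ([-n,n] ∩ ℤ)^d` specified by `a`. -/
def cylEventBox {d : ℕ} (n : ℕ)
    (a : (Fin d → (Finset.Icc (-(n : ℤ)) (n : ℤ))) → Bool) : Set (Config d) :=
  {η | ∀ k : Fin d → (Finset.Icc (-(n : ℤ)) (n : ℤ)), η (fun i => (k i : ℤ)) = a k}

/-- The Shannon entropy of the restriction of `μ` to the box `B_n`. -/
def blockEntropy {d : ℕ} (μ : Measure (Config d)) (n : ℕ) : ℝ :=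
  ∑ a : (Fin d → (Finset.Icc (-(n : ℤ)) (n : ℤ))) → Bool,
    Real.negMulLog (μ (cylEventBox n a)).toReal

/-- `h` is the entropy of the `ℤ^d`-process `μ`:
`h = lim_n H_n(μ)/(2n+1)^d`. -/
def HasEntropy {d : ℕ} (μ : Measure (Config d)) (h : ℝ) : Prop :=
  Tendsto (fun n : ℕ => blockEntropy μ n / (2 * (n : ℝ) + 1) ^ d) atTop (𝓝 h)

/-- The binary entropy function `H[p] = -p log p - (1-p) log (1-p)`. -/
def H2 (p : ℝ) : ℝ := Real.negMulLog p + Real.negMulLog (1 - p)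

/-! Let `m` be an invariant coupling of `μ` and `ν`, let `X` and `Y` be the two configurations
seen in the box `B_n`, and `Z = X xor Y`. Since `X` is a function of `(Y, Z)`, subadditivity of
Shannon entropy gives `H(X) ≤ H(Y) + ∑_{k ∈ B_n} H(Z_k)`, and by invariance every `Z_k` is a
Bernoulli variable with parameter `p = m(η(0) ≠ δ(0))`. Hence `|H_n(μ) - H_n(ν)| ≤ |B_n| H[p]`;
dividing by `|B_n|` and letting `n → ∞` gives `|H(μ) - H(ν)| ≤ H[p]`, and continuity of `H[·]`
along couplings with `p → d̄(μ, ν)` finishes the proof. -/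

namespace Real

lemma negMulLog_add_le {a b : ℝ} (ha : 0 ≤ a) (hb : 0 ≤ b) :
    negMulLog (a + b) ≤ negMulLog a + negMulLog b := by
  rcases ha.eq_or_lt with rfl | ha
  · simp
  rcases hb.eq_or_lt with rfl | hb
  · simp
  have hla := log_le_log ha (le_add_of_nonneg_right hb.le)
  have hlb := log_le_log hb (le_add_of_nonneg_left ha.le)
  simp only [negMulLog]
  nlinarith

lemma negMulLog_sum_le {ι : Type*} (s : Finset ι) (f : ι → ℝ) (hf : ∀ i ∈ s, 0 ≤ f i) :
    negMulLog (∑ i ∈ s, f i) ≤ ∑ i ∈ s, negMulLog (f i) := by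
  classical
  induction s using Finset.induction_on with
  | empty => simp
  | insert a s ha ih =>
    rw [Finset.sum_insert ha, Finset.sum_insert ha]
    have hf' : ∀ i ∈ s, 0 ≤ f i := fun i hi => hf i (Finset.mem_insert_of_mem hi)
    calc negMulLog (f a + ∑ i ∈ s, f i)
        ≤ negMulLog (f a) + negMulLog (∑ i ∈ s, f i) :=
          negMulLog_add_le (hf a (Finset.mem_insert_self a s)) (Finset.sum_nonneg hf')
      _ ≤ negMulLog (f a) + ∑ i ∈ s, negMulLog (f i) := by gcongr; exact ih hf'

/-- Pointwise form of Gibbs' inequality, from `log (a * b / x) ≤ a * b / x - 1`. -/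
lemma negMulLog_le_of_le_of_le {x a b : ℝ} (hx : 0 ≤ x) (ha : x ≤ a) (hb : x ≤ b) :
    negMulLog x ≤ x * -log a + x * -log b + (a * b - x) := by
  rcases hx.eq_or_lt with rfl | hx
  · simp only [negMulLog_zero, zero_mul, sub_zero, zero_add]
    exact mul_nonneg ha hb
  have ha' := hx.trans_le ha
  have hb' := hx.trans_le hb
  have hlog := log_le_sub_one_of_pos (div_pos (mul_pos ha' hb') hx)
  rw [log_div (mul_pos ha' hb').ne' hx.ne', log_mul ha'.ne' hb'.ne'] at hlog
  have hx_div : x * (a * b / x) = a * b := mul_div_cancel₀ _ hx.ne'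
  simp only [negMulLog]
  nlinarith [mul_le_mul_of_nonneg_left hlog hx.le]

lemma sum_negMulLog_le_marginals {S T : Type*} [Fintype S] [Fintype T] (P : S → T → ℝ)
    (hP : ∀ s t, 0 ≤ P s t) (hP1 : ∑ s, ∑ t, P s t = 1) :
    ∑ s, ∑ t, negMulLog (P s t) ≤
      ∑ s, negMulLog (∑ t, P s t) + ∑ t, negMulLog (∑ s, P s t) := by
  have hq1 : ∑ t, ∑ s, P s t = 1 := by rw [Finset.sum_comm]; exact hP1
  have hfst : ∑ s, ∑ t, P s t * -log (∑ t, P s t) = ∑ s, negMulLog (∑ t, P s t) := by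
    simp only [mul_neg, Finset.sum_neg_distrib, ← Finset.sum_mul, negMulLog, neg_mul]
  have hsnd : ∑ s, ∑ t, P s t * -log (∑ s, P s t) = ∑ t, negMulLog (∑ s, P s t) := by
    rw [Finset.sum_comm]
    simp only [mul_neg, Finset.sum_neg_distrib, ← Finset.sum_mul, negMulLog, neg_mul]
  have hprod : ∑ s, ∑ t, (∑ t, P s t) * (∑ s, P s t) = 1 := by
    rw [← Finset.sum_mul_sum, hP1, hq1, one_mul]
  calc ∑ s, ∑ t, negMulLog (P s t)
      ≤ ∑ s, ∑ t, (P s t * -log (∑ t, P s t) + P s t * -log (∑ s, P s t) +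
          ((∑ t, P s t) * (∑ s, P s t) - P s t)) := by
        gcongr with s _ t _
        exact negMulLog_le_of_le_of_le (hP s t)
          (Finset.single_le_sum (fun t _ => hP s t) (Finset.mem_univ t))
          (Finset.single_le_sum (fun s _ => hP s t) (Finset.mem_univ s))
    _ = ∑ s, negMulLog (∑ t, P s t) + ∑ t, negMulLog (∑ s, P s t) := by
        simp only [Finset.sum_add_distrib, Finset.sum_sub_distrib, hfst, hsnd, hprod, hP1]
        ring

end Real

namespace MeasureTheory.Measure

open Real

variable {S T U : Type*} [Fintype S] [MeasurableSpace S] [MeasurableSingletonClass S]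
  [Fintype T] [MeasurableSpace T] [MeasurableSingletonClass T]
  [Fintype U] [MeasurableSpace U] [MeasurableSingletonClass U]

def entropy (ρ : Measure S) : ℝ := ∑ s, negMulLog (ρ.real {s})

lemma real_map_singleton {V : Type*} [MeasurableSpace V] [MeasurableSingletonClass V]
    [DecidableEq V] (ρ : Measure S) [IsFiniteMeasure ρ] (g : S → V) (t : V) :
    (ρ.map g).real {t} = ∑ s with g s = t, ρ.real {s} := by
  rw [map_measureReal_apply (measurable_of_finite g) (measurableSet_singleton t),
    sum_measureReal_singleton]
  congr 1
  ext s
  simp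

lemma entropy_map_le (ρ : Measure S) [IsFiniteMeasure ρ] (g : S → T) :
    (ρ.map g).entropy ≤ ρ.entropy := by
  classical
  calc (ρ.map g).entropy = ∑ t, negMulLog (∑ s with g s = t, ρ.real {s}) := by
        simp only [entropy, real_map_singleton]
    _ ≤ ∑ t, ∑ s with g s = t, negMulLog (ρ.real {s}) :=
        Finset.sum_le_sum fun t _ => negMulLog_sum_le _ _ fun s _ => measureReal_nonneg
    _ = ρ.entropy := Finset.sum_fiberwise _ _ _

lemma entropy_le_entropy_map_of_leftInverse (ρ : Measure S) [IsFiniteMeasure ρ] {g : S → T}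
    {g' : T → S} (h : Function.LeftInverse g' g) : ρ.entropy ≤ (ρ.map g).entropy := by
  calc ρ.entropy = ((ρ.map g).map g').entropy := by
        rw [map_map (measurable_of_finite g') (measurable_of_finite g), h.comp_eq_id, map_id]
    _ ≤ (ρ.map g).entropy := entropy_map_le _ _

lemma entropy_prod_le (ρ : Measure (S × T)) [IsProbabilityMeasure ρ] :
    ρ.entropy ≤ (ρ.map Prod.fst).entropy + (ρ.map Prod.snd).entropy := by
  classical
  have hfst (s : S) : (ρ.map Prod.fst).real {s} = ∑ t, ρ.real {(s, t)} := by
    rw [real_map_singleton, Finset.sum_filter, Fintype.sum_prod_type, Finset.sum_comm]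
    simp
  have hsnd (t : T) : (ρ.map Prod.snd).real {t} = ∑ s, ρ.real {(s, t)} := by
    simp [real_map_singleton, Finset.sum_filter, Fintype.sum_prod_type]
  have hone : ∑ s, ∑ t, ρ.real {(s, t)} = 1 := by
    rw [← Fintype.sum_prod_type', sum_measureReal_singleton, Finset.coe_univ, probReal_univ]
  simpa only [entropy, Fintype.sum_prod_type, hfst, hsnd] using
    sum_negMulLog_le_marginals (fun s t => ρ.real {(s, t)}) (fun _ _ => measureReal_nonneg) hone

lemma entropy_map_prodMk_le (ρ : Measure S) [IsProbabilityMeasure ρ] (f : S → T) (g : S → U) :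
    (ρ.map fun s => (f s, g s)).entropy ≤ (ρ.map f).entropy + (ρ.map g).entropy := by
  have := isProbabilityMeasure_map (μ := ρ)
    (measurable_of_finite fun s => (f s, g s)).aemeasurable
  have h := entropy_prod_le (ρ.map fun s => (f s, g s))
  rwa [map_map measurable_fst (measurable_of_finite _),
    map_map measurable_snd (measurable_of_finite _)] at h

lemma entropy_pi_fin_le {β : Type*} [Fintype β] [MeasurableSpace β] [MeasurableSingletonClass β] :
    ∀ (n : ℕ) (ρ : Measure (Fin n → β)) [IsProbabilityMeasure ρ],
      ρ.entropy ≤ ∑ i, (ρ.map fun x => x i).entropy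
  | 0, ρ, _ => by
    simp [entropy, ← Set.univ_unique, probReal_univ]
  | n + 1, ρ, _ => by
    have := isProbabilityMeasure_map (μ := ρ)
      (measurable_of_finite (Fin.tail (α := fun _ => β))).aemeasurable
    calc ρ.entropy ≤ (ρ.map fun x => (x 0, Fin.tail x)).entropy :=
          entropy_le_entropy_map_of_leftInverse ρ (g' := fun p => Fin.cons p.1 p.2)
            fun x => Fin.cons_self_tail x
      _ ≤ (ρ.map fun x => x 0).entropy + (ρ.map Fin.tail).entropy := entropy_map_prodMk_le _ _ _
      _ ≤ (ρ.map fun x => x 0).entropy + ∑ i, ((ρ.map Fin.tail).map fun x => x i).entropy := by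
          gcongr
          exact entropy_pi_fin_le n _
      _ = ∑ i, (ρ.map fun x => x i).entropy := by
          simp only [Fin.sum_univ_succ, map_map (measurable_of_finite _) (measurable_of_finite _)]
          rfl

lemma entropy_pi_le {ι β : Type*} [Fintype ι] [DecidableEq ι] [Fintype β] [MeasurableSpace β]
    [MeasurableSingletonClass β] (ρ : Measure (ι → β)) [IsProbabilityMeasure ρ] :
    ρ.entropy ≤ ∑ i, (ρ.map fun x => x i).entropy := by
  let e := Fintype.equivFin ι
  have := isProbabilityMeasure_map (μ := ρ)
    (measurable_of_finite fun x : ι → β => x ∘ e.symm).aemeasurable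
  calc ρ.entropy ≤ (ρ.map fun x => x ∘ e.symm).entropy :=
        entropy_le_entropy_map_of_leftInverse ρ (g' := fun y => y ∘ e) fun x => by
          simp [Function.comp_def]
    _ ≤ ∑ j, ((ρ.map fun x => x ∘ e.symm).map fun y => y j).entropy := entropy_pi_fin_le _ _
    _ = ∑ i, (ρ.map fun x => x i).entropy := by
        refine Fintype.sum_equiv e.symm _ _ fun j => ?_
        rw [map_map (measurable_of_finite _) (measurable_of_finite _)]
        rfl

lemma entropy_bool (ρ : Measure Bool) [IsProbabilityMeasure ρ] :
    ρ.entropy = H2 (ρ.real {true}) := by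
  have hfalse : ρ.real {false} = 1 - ρ.real {true} := by
    rw [← probReal_compl_eq_one_sub (measurableSet_singleton true)]
    congr
    ext b
    simp
  rw [entropy, Fintype.sum_bool, hfalse, H2]

end MeasureTheory.Measure

open Measure Real

lemma entropy_map_fst_le_add {ι : Type*} [Fintype ι] [DecidableEq ι]
    (ρ : Measure ((ι → Bool) × (ι → Bool))) [IsProbabilityMeasure ρ] :
    (ρ.map Prod.fst).entropy ≤
      (ρ.map Prod.snd).entropy + ∑ i, (ρ.map fun x => xor (x.1 i) (x.2 i)).entropy := by
  let Δ : (ι → Bool) × (ι → Bool) → ι → Bool := fun x i => xor (x.1 i) (x.2 i)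
  have := isProbabilityMeasure_map (μ := ρ) (measurable_of_finite Δ).aemeasurable
  have hfst :
      ρ.map Prod.fst = (ρ.map fun x => (x.2, Δ x)).map fun y i => xor (y.2 i) (y.1 i) := by
    rw [map_map (measurable_of_finite _) (measurable_of_finite _)]
    congr
    ext x i
    simp [Δ]
  calc (ρ.map Prod.fst).entropy ≤ (ρ.map fun x => (x.2, Δ x)).entropy := by
        rw [hfst]
        exact entropy_map_le _ _
    _ ≤ (ρ.map Prod.snd).entropy + (ρ.map Δ).entropy := entropy_map_prodMk_le _ _ _
    _ ≤ (ρ.map Prod.snd).entropy + ∑ i, ((ρ.map Δ).map fun x => x i).entropy := by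
        gcongr
        exact entropy_pi_le _
    _ = (ρ.map Prod.snd).entropy + ∑ i, (ρ.map fun x => xor (x.1 i) (x.2 i)).entropy := by
        simp only [map_map (measurable_of_finite _) (measurable_of_finite Δ)]
        rfl

lemma abs_entropy_map_fst_sub_le {ι : Type*} [Fintype ι] [DecidableEq ι]
    (ρ : Measure ((ι → Bool) × (ι → Bool))) [IsProbabilityMeasure ρ] :
    |(ρ.map Prod.fst).entropy - (ρ.map Prod.snd).entropy| ≤
      ∑ i, (ρ.map fun x => xor (x.1 i) (x.2 i)).entropy := by
  have := isProbabilityMeasure_map (μ := ρ) measurable_swap.aemeasurable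
  have hswap_fst : (ρ.map Prod.swap).map Prod.fst = ρ.map Prod.snd := by
    rw [map_map measurable_fst measurable_swap]
    rfl
  have hswap_snd : (ρ.map Prod.swap).map Prod.snd = ρ.map Prod.fst := by
    rw [map_map measurable_snd measurable_swap]
    rfl
  have hswap_xor (i : ι) : (ρ.map Prod.swap).map (fun x => xor (x.1 i) (x.2 i)) =
      ρ.map fun x => xor (x.1 i) (x.2 i) := by
    rw [map_map (measurable_of_finite _) measurable_swap]
    exact congrArg (ρ.map ·) (funext fun x => Bool.xor_comm _ _)
  have h := entropy_map_fst_le_add (ρ.map Prod.swap)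
  simp only [hswap_fst, hswap_snd, hswap_xor] at h
  rw [abs_sub_le_iff]
  constructor <;> linarith [entropy_map_fst_le_add ρ]

lemma continuous_H2 : Continuous H2 := by
  rw [show H2 = binEntropy from
    funext fun p => (binEntropy_eq_negMulLog_add_negMulLog_one_sub p).symm]
  exact binEntropy_continuous

section Lattice

variable {d : ℕ}

abbrev Box (d n : ℕ) : Type := Fin d → Finset.Icc (-(n : ℤ)) n

def boxPattern (n : ℕ) (η : Config d) : Box d n → Bool := fun k => η fun i => k i

@[fun_prop]
lemma measurable_shiftC (v : Fin d → ℤ) : Measurable (shiftC (d := d) v) :=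
  measurable_pi_lambda _ fun _ => measurable_pi_apply _

@[fun_prop]
lemma measurable_boxPattern (n : ℕ) : Measurable (boxPattern (d := d) n) :=
  measurable_pi_lambda _ fun _ => measurable_pi_apply _

lemma card_box (n : ℕ) : Fintype.card (Box d n) = (2 * n + 1) ^ d := by
  rw [Fintype.card_fun, Fintype.card_coe, Int.card_Icc, Fintype.card_fin]
  congr 1
  omega

lemma blockEntropy_eq_entropy_map (μ : Measure (Config d)) (n : ℕ) :
    blockEntropy μ n = (μ.map (boxPattern n)).entropy := by
  refine Finset.sum_congr rfl fun a _ => ?_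
  have hcyl : cylEventBox n a = boxPattern n ⁻¹' {a} := by
    ext η
    simp [cylEventBox, boxPattern, funext_iff]
  rw [map_measureReal_apply (measurable_boxPattern n) (measurableSet_singleton a), ← hcyl]
  rfl

lemma map_disagree_eq_of_invariant {m : Measure (Config d × Config d)}
    (hinv : ∀ v, m.map (Prod.map (shiftC v) (shiftC v)) = m) (v : Fin d → ℤ) :
    m.map (fun ω => xor (ω.1 v) (ω.2 v)) = m.map (fun ω => xor (ω.1 0) (ω.2 0)) := by
  conv_rhs => rw [← hinv v]
  rw [map_map (by fun_prop) (by fun_prop)]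
  congr
  ext ω
  simp [shiftC]

lemma entropy_map_disagree_eq {m : Measure (Config d × Config d)} [IsProbabilityMeasure m]
    (hinv : ∀ v, m.map (Prod.map (shiftC v) (shiftC v)) = m) (v : Fin d → ℤ) :
    (m.map fun ω => xor (ω.1 v) (ω.2 v)).entropy = H2 (m.real {p | p.1 0 ≠ p.2 0}) := by
  have hdis : Measurable fun ω : Config d × Config d => xor (ω.1 0) (ω.2 0) := by fun_prop
  have := isProbabilityMeasure_map (μ := m) hdis.aemeasurable
  rw [map_disagree_eq_of_invariant hinv, entropy_bool,
    map_measureReal_apply hdis (measurableSet_singleton true)]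
  congr 2
  ext ω
  simp

lemma abs_blockEntropy_sub_le {μ ν : Measure (Config d)} {m : Measure (Config d × Config d)}
    (hm : m ∈ invCouplings μ ν) (n : ℕ) :
    |blockEntropy μ n - blockEntropy ν n| ≤
      (2 * (n : ℝ) + 1) ^ d * H2 (m.real {p | p.1 0 ≠ p.2 0}) := by
  obtain ⟨hprob, hinv, rfl, rfl⟩ := hm
  let R : Config d × Config d → (Box d n → Bool) × (Box d n → Bool) :=
    fun ω => (boxPattern n ω.1, boxPattern n ω.2)
  have hR : Measurable R := by unfold R; fun_prop
  have := isProbabilityMeasure_map (μ := m) hR.aemeasurable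
  have hμ : blockEntropy (m.map Prod.fst) n = ((m.map R).map Prod.fst).entropy := by
    rw [blockEntropy_eq_entropy_map, map_map (measurable_boxPattern n) measurable_fst,
      map_map measurable_fst hR]
    rfl
  have hν : blockEntropy (m.map Prod.snd) n = ((m.map R).map Prod.snd).entropy := by
    rw [blockEntropy_eq_entropy_map, map_map (measurable_boxPattern n) measurable_snd,
      map_map measurable_snd hR]
    rfl
  have hsite (k : Box d n) : ((m.map R).map fun x => xor (x.1 k) (x.2 k)).entropy =
      H2 (m.real {p | p.1 0 ≠ p.2 0}) := by
    rw [map_map (measurable_of_finite _) hR]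
    exact entropy_map_disagree_eq hinv fun i => k i
  calc |blockEntropy (m.map Prod.fst) n - blockEntropy (m.map Prod.snd) n|
      ≤ ∑ k, ((m.map R).map fun x => xor (x.1 k) (x.2 k)).entropy := by
        rw [hμ, hν]
        exact abs_entropy_map_fst_sub_le _
    _ = (2 * (n : ℝ) + 1) ^ d * H2 (m.real {p | p.1 0 ≠ p.2 0}) := by
        rw [Finset.sum_congr rfl fun k _ => hsite k, Finset.sum_const, Finset.card_univ,
          card_box, nsmul_eq_mul]
        push_cast
        rfl

lemma abs_sub_le_of_abs_blockEntropy_sub_le {μ ν : Measure (Config d)} {a b c : ℝ}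
    (hμh : HasEntropy μ a) (hνh : HasEntropy ν b)
    (hbound : ∀ n : ℕ, |blockEntropy μ n - blockEntropy ν n| ≤ (2 * (n : ℝ) + 1) ^ d * c) :
    |a - b| ≤ c := by
  refine le_of_tendsto (hμh.sub hνh).abs (Eventually.of_forall fun n => ?_)
  have hpos : (0 : ℝ) < (2 * (n : ℝ) + 1) ^ d := by positivity
  rw [div_sub_div_same, abs_div, abs_of_pos hpos, div_le_iff₀ hpos, mul_comm c]
  exact hbound n

lemma prod_mem_invCouplings {μ ν : Measure (Config d)} [IsProbabilityMeasure μ]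
    [IsProbabilityMeasure ν] (hμinv : ∀ v, μ.map (shiftC v) = μ)
    (hνinv : ∀ v, ν.map (shiftC v) = ν) : μ.prod ν ∈ invCouplings μ ν := by
  refine ⟨inferInstance, fun v => ?_, by simp, by simp⟩
  rw [← Measure.map_prod_map _ _ (measurable_shiftC v) (measurable_shiftC v), hμinv v, hνinv v]

end Lattice

/-- For `ℤ^d`-invariant `μ, ν` on `{0,1}^{ℤ^d}`,
`|H(μ) − H(ν)| ≤ H[d̄(μ,ν)]`. -/
theorem statement16 {d : ℕ} (μ ν : Measure (Config d))
    (hμ : IsProbabilityMeasure μ) (hν : IsProbabilityMeasure ν)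
    (hμinv : ∀ v : Fin d → ℤ, Measure.map (shiftC v) μ = μ)
    (hνinv : ∀ v : Fin d → ℤ, Measure.map (shiftC v) ν = ν)
    (hμent : ℝ) (hνent : ℝ)
    (hμh : HasEntropy μ hμent) (hνh : HasEntropy ν hνent) :
    |hμent - hνent| ≤ H2 ((dbar μ ν).toReal) := by
  let D := {p : Config d × Config d | p.1 0 ≠ p.2 0}
  let S := (fun m : Measure (Config d × Config d) => m D) '' invCouplings μ ν
  have hprod := prod_mem_invCouplings hμinv hνinv
  obtain ⟨u, -, hu, hu_mem⟩ := exists_seq_tendsto_sInf (S := S) ⟨_, μ.prod ν, hprod, rfl⟩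
    (OrderBot.bddBelow S)
  have hdbar : dbar μ ν ≠ ⊤ := ne_top_of_le_ne_top (measure_ne_top _ D) (sInf_le ⟨_, hprod, rfl⟩)
  refine ge_of_tendsto ((continuous_H2.tendsto _).comp ((ENNReal.tendsto_toReal hdbar).comp hu))
    (Eventually.of_forall fun k => ?_)
  obtain ⟨m, hm, hmk⟩ := hu_mem k
  simp only [Function.comp_apply, ← hmk]
  exact abs_sub_le_of_abs_blockEntropy_sub_le hμh hνh (abs_blockEntropy_sub_le hm)

end
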